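/- Let ω ∈ [0,1], let Q = [[D, −C], [−B, A]] with Q_ω a nonsingular M-matrix and Q_ω·1 > 0, let Q̃ = [[D̃, −C̃], [−B̃, Ã]] be a real nonsingular M-matrix with Q̃ ≤ Q_ω and Q̃·1 > 0, and let Ψ̃ be the minimal nonnegative solution of YB̃Y − YÃ − D̃Y + C̃ = 0. Then the dual NARE YBY − YA − DY + C = 0 has exactly one solution Ψ ∈ C^{n×m} with |Ψ| ≤ Ψ̃ entrywise; moreover A − BΨ is nonsingular, every eigenvalue μ of A − BΨ satisfies ω·Re(μ) + (1−ω)·Im(μ) > 0, and Ψ is the unique solution of the dual NARE with this spectral property. -/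

import Mathlib

open Matrix Filter Kronecker

noncomputable section

/-- The ω-weighted linear functional `z ↦ ω·Re z + (1-ω)·Im z`. -/
def wlin (ω : ℝ) (z : ℂ) : ℝ := ω * z.re + (1 - ω) * z.im

/-- The ω-comparison matrix of a complex square matrix. -/
def omegaComp {N : Type*} [DecidableEq N] (ω : ℝ) (B : Matrix N N ℂ) : Matrix N N ℝ :=
  Matrix.of fun i j => if i = j then wlin ω (B i i) else -‖B i j‖

/-- A real square matrix is a nonsingular M-matrix: nonpositive off-diagonal entries and
`M *ᵥ u > 0` entrywise for some entrywise positive `u`. -/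
def IsNonsingMMatrix {N : Type*} [Fintype N] (M : Matrix N N ℝ) : Prop :=
  (∀ i j, i ≠ j → M i j ≤ 0) ∧ ∃ u : N → ℝ, (∀ i, 0 < u i) ∧ ∀ i, 0 < (M *ᵥ u) i

/-- Entrywise absolute value of a complex matrix. -/
def cabs {α β : Type*} (M : Matrix α β ℂ) : Matrix α β ℝ :=
  Matrix.of fun i j => ‖M i j‖

/-!
Moving the diagonals of `D` and `A` to the left turns the dual NARE into a fixed-point equation
`Z = F(Z)`. Started from `0`, the real iteration for the comparison equation increases to its
minimal nonnegative solution `Ψt`, with row sums at most `1`. The complex iteration is dominated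
entrywise by the real one, increments included, so it converges to a solution `Ψ` with
`|Ψ| ≤ Ψt`. For any such `Ψ`, weighted Gershgorin discs (weights `1` for `A - BΨ`, `1 - Ψt 1` for
`D - ΨB`) put both spectra in the half-plane `wlin ω > 0`. If `Y` is another solution with that
spectral property for `A - BY`, then `Y - Ψ` solves a Sylvester equation whose coefficients have
disjoint spectra, so `Y = Ψ`; this gives both uniqueness statements.
-/

open Polynomial Topology

lemma wlin_sub (ω : ℝ) (x y : ℂ) : wlin ω (x - y) = wlin ω x - wlin ω y := by
  simp only [wlin, Complex.sub_re, Complex.sub_im]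
  ring

lemma wlin_le_norm {ω : ℝ} (hω : ω ∈ Set.Icc (0 : ℝ) 1) (z : ℂ) : wlin ω z ≤ ‖z‖ := by
  have h1ω : 0 ≤ 1 - ω := sub_nonneg.mpr hω.2
  calc wlin ω z ≤ ω * ‖z‖ + (1 - ω) * ‖z‖ := by
        unfold wlin
        gcongr
        exacts [hω.1, Complex.re_le_norm z, Complex.im_le_norm z]
    _ = ‖z‖ := by ring

lemma wlin_add (ω : ℝ) (x y : ℂ) : wlin ω (x + y) = wlin ω x + wlin ω y := by
  simp only [wlin, Complex.add_re, Complex.add_im]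
  ring

lemma wlin_neg (ω : ℝ) (x : ℂ) : wlin ω (-x) = -wlin ω x := by
  simp only [wlin, Complex.neg_re, Complex.neg_im]
  ring

section MatrixOrder

variable {α β γ : Type*} [Fintype β]

lemma Matrix.mul_apply_nonneg {P : Matrix α β ℝ} {Q : Matrix β γ ℝ} (hP : ∀ i j, 0 ≤ P i j)
    (hQ : ∀ i j, 0 ≤ Q i j) (i : α) (k : γ) : 0 ≤ (P * Q) i k :=
  Finset.sum_nonneg fun j _ => mul_nonneg (hP i j) (hQ j k)

lemma Matrix.norm_mul_apply_le {𝕜 : Type*} [NormedRing 𝕜] {P : Matrix α β 𝕜} {Q : Matrix β γ 𝕜}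
    {P' : Matrix α β ℝ} {Q' : Matrix β γ ℝ} (hP : ∀ i j, ‖P i j‖ ≤ P' i j)
    (hQ : ∀ i j, ‖Q i j‖ ≤ Q' i j) (i : α) (k : γ) : ‖(P * Q) i k‖ ≤ (P' * Q') i k :=
  (norm_sum_le _ _).trans <| Finset.sum_le_sum fun j _ => (norm_mul_le _ _).trans <|
    mul_le_mul (hP i j) (hQ j k) (norm_nonneg _) ((norm_nonneg _).trans (hP i j))

lemma Matrix.mulVec_apply_mono {M : Matrix α β ℝ} (hM : ∀ i j, 0 ≤ M i j) {v w : β → ℝ}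
    (hvw : ∀ j, v j ≤ w j) (i : α) : (M *ᵥ v) i ≤ (M *ᵥ w) i :=
  dotProduct_le_dotProduct_of_nonneg_left hvw fun j => hM i j

end MatrixOrder

section ZMatrix

variable {ι : Type*}

lemma Matrix.diagonal_diag_sub_apply [DecidableEq ι] {R : Type*} [AddGroup R] (M : Matrix ι ι R)
    (i j : ι) : (diagonal M.diag - M) i j = if i = j then 0 else -M i j := by
  by_cases hij : i = j
  · subst hij
    simp
  · simp [hij]

lemma Matrix.diagonal_diag_sub_nonneg [DecidableEq ι] {M : Matrix ι ι ℝ}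
    (hM : ∀ i j, i ≠ j → M i j ≤ 0) (i j : ι) : 0 ≤ (diagonal M.diag - M) i j := by
  rw [diagonal_diag_sub_apply]
  split_ifs with hij
  exacts [le_rfl, neg_nonneg.mpr (hM i j hij)]

variable [Fintype ι]

lemma Matrix.mulVec_apply_le_diag_mul {M : Matrix ι ι ℝ} (hM : ∀ i j, i ≠ j → M i j ≤ 0)
    {w : ι → ℝ} (hw : ∀ j, 0 ≤ w j) (i : ι) : (M *ᵥ w) i ≤ M i i * w i := by
  classical
  rw [mulVec, dotProduct, ← Finset.add_sum_erase _ _ (Finset.mem_univ i), add_le_iff_nonpos_right]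
  exact Finset.sum_nonpos fun j hj =>
    mul_nonpos_of_nonpos_of_nonneg (hM i j (Finset.ne_of_mem_erase hj).symm) (hw j)

lemma Matrix.pos_of_mulVec_pos {M : Matrix ι ι ℝ} (hM : ∀ i j, i ≠ j → M i j ≤ 0)
    {w : ι → ℝ} (hw : ∀ j, 0 ≤ w j) (hMw : ∀ i, 0 < (M *ᵥ w) i) (i : ι) : 0 < w i := by
  refine (hw i).lt_of_ne fun hwi => ?_
  have := (hMw i).trans_le (mulVec_apply_le_diag_mul hM hw i)
  rw [← hwi, mul_zero] at this
  exact lt_irrefl 0 this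

end ZMatrix

section OmegaComp

variable {ω : ℝ} {p : Type*} [DecidableEq p] {M : Matrix p p ℂ} {Mt : Matrix p p ℝ}

lemma norm_le_neg_of_le_omegaComp (hM : ∀ i j, Mt i j ≤ omegaComp ω M i j) {i j : p}
    (hij : i ≠ j) : ‖M i j‖ ≤ -Mt i j := by
  have := hM i j
  simp only [omegaComp, of_apply, if_neg hij] at this
  linarith

lemma le_wlin_of_le_omegaComp (hM : ∀ i j, Mt i j ≤ omegaComp ω M i j) (i : p) :
    Mt i i ≤ wlin ω (M i i) := by
  simpa [omegaComp] using hM i i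

lemma norm_diagonal_diag_sub_le (hM : ∀ i j, Mt i j ≤ omegaComp ω M i j) (i j : p) :
    ‖(diagonal M.diag - M) i j‖ ≤ (diagonal Mt.diag - Mt) i j := by
  rw [diagonal_diag_sub_apply, diagonal_diag_sub_apply]
  split_ifs with hij
  · simp
  · rw [norm_neg]
    exact norm_le_neg_of_le_omegaComp hM hij

lemma le_omegaComp_sub (hω : ω ∈ Set.Icc (0 : ℝ) 1) (hM : ∀ i j, Mt i j ≤ omegaComp ω M i j)
    {P : Matrix p p ℂ} {Pt : Matrix p p ℝ} (hP : ∀ i j, ‖P i j‖ ≤ Pt i j) (i j : p) :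
    (Mt - Pt) i j ≤ omegaComp ω (M - P) i j := by
  rw [Matrix.sub_apply]
  by_cases hij : i = j
  · subst hij
    simp only [omegaComp, of_apply, ↓reduceIte, Matrix.sub_apply, wlin_sub]
    linarith [le_wlin_of_le_omegaComp hM i, wlin_le_norm hω (P i i), hP i i]
  · simp only [omegaComp, of_apply, if_neg hij, Matrix.sub_apply]
    linarith [norm_sub_le (M i j) (P i j), norm_le_neg_of_le_omegaComp hM hij, hP i j]

lemma omegaComp_mulVec_apply [Fintype p] (T : Matrix p p ℂ) (w : p → ℝ) (k : p) :
    (omegaComp ω T *ᵥ w) k = wlin ω (T k k) * w k - ∑ j ∈ Finset.univ.erase k, ‖T k j‖ * w j := by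
  rw [mulVec, dotProduct, ← Finset.add_sum_erase _ _ (Finset.mem_univ k), sub_eq_add_neg,
    ← Finset.sum_neg_distrib]
  congr 1
  · simp [omegaComp]
  · refine Finset.sum_congr rfl fun j hj => ?_
    simp [omegaComp, (Finset.ne_of_mem_erase hj).symm]

end OmegaComp

/-- Gershgorin's discs for `W⁻¹ T W` with `W = diagonal w`. -/
theorem wlin_pos_of_mem_spectrum {p : Type*} [Fintype p] [DecidableEq p] {ω : ℝ}
    (hω : ω ∈ Set.Icc (0 : ℝ) 1) {T : Matrix p p ℂ} {w : p → ℝ} (hw : ∀ i, 0 < w i)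
    (hTw : ∀ i, 0 < (omegaComp ω T *ᵥ w) i) {μ : ℂ} (hμ : μ ∈ spectrum ℂ T) :
    0 < wlin ω μ := by
  have hw' : ∀ i, (w i : ℂ) ≠ 0 := fun i => Complex.ofReal_ne_zero.mpr (hw i).ne'
  let W : (Matrix p p ℂ)ˣ :=
    { val := diagonal fun i => (w i : ℂ)
      inv := diagonal fun i => (w i : ℂ)⁻¹
      val_inv := by simp [diagonal_mul_diagonal, hw']
      inv_val := by simp [diagonal_mul_diagonal, hw'] }
  have hμ' :
      Module.End.HasEigenvalue (toLin' ((↑W⁻¹ : Matrix p p ℂ) * T * (W : Matrix p p ℂ))) μ := by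
    rwa [Module.End.hasEigenvalue_iff_mem_spectrum, spectrum_toLin', spectrum.units_conjugate']
  obtain ⟨k, hk⟩ := eigenvalue_mem_ball hμ'
  have hentry : ∀ j,
      ((↑W⁻¹ : Matrix p p ℂ) * T * (W : Matrix p p ℂ)) k j = (w k : ℂ)⁻¹ * T k j * w j := by
    intro j
    simp [W, diagonal_mul, mul_diagonal]
  have hdiag : ((↑W⁻¹ : Matrix p p ℂ) * T * (W : Matrix p p ℂ)) k k = T k k := by
    rw [hentry, mul_comm _ (T k k), mul_assoc, inv_mul_cancel₀ (hw' k), mul_one]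
  rw [Metric.mem_closedBall, hdiag, dist_comm, Complex.dist_eq] at hk
  simp only [hentry, norm_mul, norm_inv, Complex.norm_real, Real.norm_of_nonneg (hw _).le] at hk
  have hsum : ∑ j ∈ Finset.univ.erase k, (w k)⁻¹ * ‖T k j‖ * w j
      = (w k)⁻¹ * ∑ j ∈ Finset.univ.erase k, ‖T k j‖ * w j := by
    rw [Finset.mul_sum]
    exact Finset.sum_congr rfl fun j _ => by ring
  have hdisc : wlin ω (T k k) - wlin ω μ ≤ (w k)⁻¹ * ∑ j ∈ Finset.univ.erase k, ‖T k j‖ * w j :=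
    (wlin_sub ω _ _ ▸ wlin_le_norm hω _).trans (hsum ▸ hk)
  have hrow := hTw k
  rw [omegaComp_mulVec_apply] at hrow
  rw [inv_mul_eq_div, le_div_iff₀ (hw k)] at hdisc
  nlinarith [hw k]

theorem Matrix.eq_zero_of_mul_eq_mul_of_disjoint_spectrum {𝕜 p q : Type*} [Field 𝕜]
    [IsAlgClosed 𝕜] [Fintype p] [DecidableEq p] [Fintype q] [DecidableEq q]
    {E : Matrix q p 𝕜} {S : Matrix p p 𝕜} {T : Matrix q q 𝕜} (hE : E * S = T * E)
    (hST : ∀ μ ∈ spectrum 𝕜 T, μ ∉ spectrum 𝕜 S) : E = 0 := by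
  rcases isEmpty_or_nonempty p with hp | hp
  · ext i j
    exact isEmptyElim j
  have hpow : ∀ k : ℕ, E * S ^ k = T ^ k * E := by
    intro k
    induction k with
    | zero => simp
    | succ k ih => rw [pow_succ, pow_succ, ← Matrix.mul_assoc, ih, Matrix.mul_assoc, hE,
        Matrix.mul_assoc]
  have haeval : ∀ P : 𝕜[X], E * aeval S P = aeval T P * E := by
    intro P
    induction P using Polynomial.induction_on' with
    | add f g hf hg => rw [map_add, map_add, Matrix.mul_add, Matrix.add_mul, hf, hg]
    | monomial k c =>
      rw [aeval_monomial, aeval_monomial, ← Algebra.smul_def, ← Algebra.smul_def,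
        Matrix.mul_smul, Matrix.smul_mul, hpow]
  obtain ⟨u, hu⟩ : IsUnit (aeval S T.charpoly) := by
    rw [← spectrum.zero_notMem_iff 𝕜, spectrum.map_polynomial_aeval_of_nonempty S _
      (spectrum.nonempty_of_isAlgClosed_of_finiteDimensional 𝕜 S)]
    rintro ⟨μ, hμS, hμ⟩
    exact hST μ (mem_spectrum_iff_isRoot_charpoly.mpr hμ) hμS
  have hEu : E * (u : Matrix p p 𝕜) = 0 := by rw [hu, haeval, aeval_self_charpoly, Matrix.zero_mul]
  rw [← Matrix.mul_one E, ← u.mul_inv, ← Matrix.mul_assoc, hEu, Matrix.zero_mul]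

section NARE

variable {ι κ : Type*} [Fintype ι] [Fintype κ]

/-- The coefficient matrix `[[Dt, -Ct], [-Bt, At]]` of a real dual NARE is a Z-matrix with
positive row sums. -/
structure IsMAREData (At : Matrix κ κ ℝ) (Bt : Matrix κ ι ℝ) (Ct : Matrix ι κ ℝ)
    (Dt : Matrix ι ι ℝ) : Prop where
  B_nonneg : ∀ j i, 0 ≤ Bt j i
  C_nonneg : ∀ i j, 0 ≤ Ct i j
  A_offDiag_nonpos : ∀ j k, j ≠ k → At j k ≤ 0
  D_offDiag_nonpos : ∀ i k, i ≠ k → Dt i k ≤ 0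
  B_rowSum_lt : ∀ j, (Bt *ᵥ 1) j < (At *ᵥ 1) j
  C_rowSum_lt : ∀ i, (Ct *ᵥ 1) i < (Dt *ᵥ 1) i

namespace IsMAREData

variable {At : Matrix κ κ ℝ} {Bt : Matrix κ ι ℝ} {Ct : Matrix ι κ ℝ} {Dt : Matrix ι ι ℝ}
  (h : IsMAREData At Bt Ct Dt)
include h

lemma D_diag_pos (i : ι) : 0 < Dt i i := by
  have hC : 0 ≤ (Ct *ᵥ 1) i := Finset.sum_nonneg fun j _ => mul_nonneg (h.C_nonneg i j) zero_le_one
  simpa using hC.trans_lt ((h.C_rowSum_lt i).trans_le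
    (mulVec_apply_le_diag_mul h.D_offDiag_nonpos (fun _ => zero_le_one) i))

lemma A_diag_pos (j : κ) : 0 < At j j := by
  have hB : 0 ≤ (Bt *ᵥ 1) j := Finset.sum_nonneg fun i _ => mul_nonneg (h.B_nonneg j i) zero_le_one
  simpa using hB.trans_lt ((h.B_rowSum_lt j).trans_le
    (mulVec_apply_le_diag_mul h.A_offDiag_nonpos (fun _ => zero_le_one) j))

lemma den_pos (i : ι) (j : κ) : 0 < Dt i i + At j j :=
  add_pos (h.D_diag_pos i) (h.A_diag_pos j)

lemma sub_mul_mulVec_one_pos {Ψt : Matrix ι κ ℝ} (hΨ1 : ∀ i, (Ψt *ᵥ 1) i ≤ 1) (j : κ) :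
    0 < ((At - Bt * Ψt) *ᵥ 1) j := by
  rw [sub_mulVec, ← mulVec_mulVec, Pi.sub_apply]
  linarith [mulVec_apply_mono (w := 1) h.B_nonneg hΨ1 j, h.B_rowSum_lt j]

lemma sub_mul_mulVec_one_sub_pos {Ψt : Matrix ι κ ℝ} (hΨ0 : ∀ i j, 0 ≤ Ψt i j)
    (hΨsol : Ψt * Bt * Ψt - Ψt * At - Dt * Ψt + Ct = 0) (i : ι) :
    0 < ((Dt - Ψt * Bt) *ᵥ (1 - Ψt *ᵥ 1)) i := by
  have hres := congrArg (· *ᵥ (1 : κ → ℝ)) hΨsol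
  simp only [add_mulVec, sub_mulVec, zero_mulVec, ← mulVec_mulVec] at hres
  have key : (Dt - Ψt * Bt) *ᵥ (1 - Ψt *ᵥ 1) = (Dt *ᵥ 1 - Ct *ᵥ 1) + Ψt *ᵥ (At *ᵥ 1 - Bt *ᵥ 1) := by
    simp only [sub_mulVec, mulVec_sub, ← mulVec_mulVec]
    linear_combination hres
  have hΨA : 0 ≤ (Ψt *ᵥ (At *ᵥ 1 - Bt *ᵥ 1)) i :=
    dotProduct_nonneg_of_nonneg (hΨ0 i ·) fun j => sub_nonneg.2 (h.B_rowSum_lt j).le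
  rw [key, Pi.add_apply, Pi.sub_apply]
  linarith [h.C_rowSum_lt i]

lemma one_sub_mulVec_pos {Ψt : Matrix ι κ ℝ} (hΨ0 : ∀ i j, 0 ≤ Ψt i j)
    (hΨsol : Ψt * Bt * Ψt - Ψt * At - Dt * Ψt + Ct = 0) (hΨ1 : ∀ i, (Ψt *ᵥ 1) i ≤ 1) (i : ι) :
    0 < (1 - Ψt *ᵥ 1) i := by
  refine pos_of_mulVec_pos (M := Dt - Ψt * Bt) (fun i k hik => ?_) (fun i => sub_nonneg.2 (hΨ1 i))
    (h.sub_mul_mulVec_one_sub_pos hΨ0 hΨsol) i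
  rw [Matrix.sub_apply]
  linarith [h.D_offDiag_nonpos i k hik, mul_apply_nonneg hΨ0 h.B_nonneg i k]

end IsMAREData

variable [DecidableEq ι] [DecidableEq κ]

section Map

variable {𝕜 : Type*} [Field 𝕜] (A : Matrix κ κ 𝕜) (B : Matrix κ ι 𝕜) (C : Matrix ι κ 𝕜)
  (D : Matrix ι ι 𝕜)

def nareNumer (Z : Matrix ι κ 𝕜) : Matrix ι κ 𝕜 :=
  Z * B * Z + C + (diagonal D.diag - D) * Z + Z * (diagonal A.diag - A)

/-- Moving the diagonals of `D` and `A` in `Z B Z - Z A - D Z + C = 0` to the left turns it into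
`(D i i + A j j) Z i j = nareNumer A B C D Z i j`. -/
def nareMap (Z : Matrix ι κ 𝕜) : Matrix ι κ 𝕜 :=
  of fun i j => nareNumer A B C D Z i j / (D i i + A j j)

def nareIter (k : ℕ) : Matrix ι κ 𝕜 :=
  (nareMap A B C D)^[k] 0

lemma nareMap_apply (Z : Matrix ι κ 𝕜) (i : ι) (j : κ) :
    nareMap A B C D Z i j = nareNumer A B C D Z i j / (D i i + A j j) := rfl

lemma nareIter_zero : nareIter A B C D 0 = 0 := rfl

lemma nareIter_succ (k : ℕ) : nareIter A B C D (k + 1) = nareMap A B C D (nareIter A B C D k) :=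
  Function.iterate_succ_apply' _ _ _

lemma nareNumer_sub_nareNumer (Z Z' : Matrix ι κ 𝕜) :
    nareNumer A B C D Z' - nareNumer A B C D Z
      = (Z' - Z) * B * Z' + Z * B * (Z' - Z) + (diagonal D.diag - D) * (Z' - Z)
        + (Z' - Z) * (diagonal A.diag - A) := by
  simp only [nareNumer, Matrix.sub_mul, Matrix.mul_sub]
  abel

lemma nareMap_eq_self_iff (hden : ∀ i j, D i i + A j j ≠ 0) (Z : Matrix ι κ 𝕜) :
    nareMap A B C D Z = Z ↔ Z * B * Z - Z * A - D * Z + C = 0 := by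
  have hres : Z * B * Z - Z * A - D * Z + C
      = nareNumer A B C D Z - (diagonal D.diag * Z + Z * diagonal A.diag) := by
    simp only [nareNumer, Matrix.sub_mul, Matrix.mul_sub]
    abel
  rw [hres, sub_eq_zero]
  simp only [← Matrix.ext_iff, nareMap_apply, div_eq_iff (hden _ _), Matrix.add_apply,
    diagonal_mul, mul_diagonal, diag_apply]
  exact forall₂_congr fun i j =>
    ⟨fun h => by linear_combination h, fun h => by linear_combination h⟩

lemma continuous_nareMap [TopologicalSpace 𝕜] [IsTopologicalRing 𝕜] :
    Continuous (nareMap A B C D) := by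
  refine continuous_pi fun i => continuous_pi fun j => ?_
  simp only [nareMap_apply, div_eq_mul_inv, nareNumer]
  fun_prop

end Map

namespace IsMAREData

variable {At : Matrix κ κ ℝ} {Bt : Matrix κ ι ℝ} {Ct : Matrix ι κ ℝ} {Dt : Matrix ι ι ℝ}
  (h : IsMAREData At Bt Ct Dt)
include h

lemma nareNumer_nonneg {Z : Matrix ι κ ℝ} (hZ : ∀ i j, 0 ≤ Z i j) (i : ι) (j : κ) :
    0 ≤ nareNumer At Bt Ct Dt Z i j := by
  simp only [nareNumer, Matrix.add_apply]
  have := mul_apply_nonneg (mul_apply_nonneg hZ h.B_nonneg) hZ i j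
  have := mul_apply_nonneg (diagonal_diag_sub_nonneg h.D_offDiag_nonpos) hZ i j
  have := mul_apply_nonneg hZ (diagonal_diag_sub_nonneg h.A_offDiag_nonpos) i j
  linarith [h.C_nonneg i j]

lemma nareNumer_mono {Z Z' : Matrix ι κ ℝ} (hZ : ∀ i j, 0 ≤ Z i j) (hZZ' : ∀ i j, Z i j ≤ Z' i j)
    (i : ι) (j : κ) : nareNumer At Bt Ct Dt Z i j ≤ nareNumer At Bt Ct Dt Z' i j := by
  have hΔ : ∀ i j, 0 ≤ (Z' - Z) i j := fun i j => sub_nonneg.mpr (hZZ' i j)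
  have hZ' : ∀ i j, 0 ≤ Z' i j := fun i j => (hZ i j).trans (hZZ' i j)
  rw [← sub_nonneg, ← Matrix.sub_apply, nareNumer_sub_nareNumer]
  simp only [Matrix.add_apply]
  have := mul_apply_nonneg (mul_apply_nonneg hΔ h.B_nonneg) hZ' i j
  have := mul_apply_nonneg (mul_apply_nonneg hZ h.B_nonneg) hΔ i j
  have := mul_apply_nonneg (diagonal_diag_sub_nonneg h.D_offDiag_nonpos) hΔ i j
  have := mul_apply_nonneg hΔ (diagonal_diag_sub_nonneg h.A_offDiag_nonpos) i j
  linarith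

lemma nareMap_nonneg {Z : Matrix ι κ ℝ} (hZ : ∀ i j, 0 ≤ Z i j) (i : ι) (j : κ) :
    0 ≤ nareMap At Bt Ct Dt Z i j :=
  div_nonneg (h.nareNumer_nonneg hZ i j) (h.den_pos i j).le

lemma nareMap_mono {Z Z' : Matrix ι κ ℝ} (hZ : ∀ i j, 0 ≤ Z i j) (hZZ' : ∀ i j, Z i j ≤ Z' i j)
    (i : ι) (j : κ) : nareMap At Bt Ct Dt Z i j ≤ nareMap At Bt Ct Dt Z' i j :=
  div_le_div_of_nonneg_right (h.nareNumer_mono hZ hZZ' i j) (h.den_pos i j).le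

/-- Summing `(Dt i i + At j j) F i j = nareNumer Z i j` over `j`, the hypothesis `Z ≤ F` absorbs
the `At`-diagonal and leaves `Dt i i * (F *ᵥ 1) i ≤ Dt i i - ((Dt - Ct) *ᵥ 1) i`. -/
lemma nareMap_mulVec_one_le {Z : Matrix ι κ ℝ} (hZ0 : ∀ i j, 0 ≤ Z i j)
    (hZ1 : ∀ i, (Z *ᵥ 1) i ≤ 1) (hZF : ∀ i j, Z i j ≤ nareMap At Bt Ct Dt Z i j) (i : ι) :
    (nareMap At Bt Ct Dt Z *ᵥ 1) i ≤ 1 := by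
  set F := nareMap At Bt Ct Dt Z
  have hrow : Dt i i * (F *ᵥ 1) i + (F *ᵥ At.diag) i = (nareNumer At Bt Ct Dt Z *ᵥ 1) i := by
    simp only [mulVec, dotProduct, Pi.one_apply, mul_one, Finset.mul_sum,
      ← Finset.sum_add_distrib]
    refine Finset.sum_congr rfl fun j _ => ?_
    simp only [F, nareMap_apply, diag_apply]
    field_simp [(h.den_pos i j).ne']
  have hD : ((diagonal Dt.diag - Dt) *ᵥ (Z *ᵥ 1)) i ≤ Dt i i - (Dt *ᵥ 1) i := by
    calc ((diagonal Dt.diag - Dt) *ᵥ (Z *ᵥ 1)) i ≤ ((diagonal Dt.diag - Dt) *ᵥ 1) i :=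
          mulVec_apply_mono (diagonal_diag_sub_nonneg h.D_offDiag_nonpos) hZ1 i
      _ = Dt i i - (Dt *ᵥ 1) i := by simp [sub_mulVec, mulVec_diagonal]
  have hBA : (Z *ᵥ (Bt *ᵥ (Z *ᵥ 1))) i + (Z *ᵥ ((diagonal At.diag - At) *ᵥ 1)) i
      ≤ (Z *ᵥ At.diag) i := by
    rw [← Pi.add_apply, ← mulVec_add]
    refine mulVec_apply_mono hZ0 (fun j => ?_) i
    have hBZ := mulVec_apply_mono (w := 1) h.B_nonneg hZ1 j
    have := h.B_rowSum_lt j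
    simp only [Pi.add_apply, sub_mulVec, mulVec_diagonal, Pi.sub_apply, Pi.one_apply, mul_one]
    linarith
  have hZF' : (Z *ᵥ At.diag) i ≤ (F *ᵥ At.diag) i :=
    dotProduct_le_dotProduct_of_nonneg_right (hZF i) fun j => (h.A_diag_pos j).le
  have hnum : (nareNumer At Bt Ct Dt Z *ᵥ 1) i
      = (Z *ᵥ (Bt *ᵥ (Z *ᵥ 1))) i + (Ct *ᵥ 1) i + ((diagonal Dt.diag - Dt) *ᵥ (Z *ᵥ 1)) i
        + (Z *ᵥ ((diagonal At.diag - At) *ᵥ 1)) i := by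
    simp only [nareNumer, add_mulVec, ← mulVec_mulVec, Pi.add_apply]
  have hF1 : Dt i i * (F *ᵥ 1) i ≤ Dt i i * 1 := by linarith [h.C_rowSum_lt i]
  exact le_of_mul_le_mul_left hF1 (h.D_diag_pos i)

lemma nareIter_nonneg (k : ℕ) (i : ι) (j : κ) : 0 ≤ nareIter At Bt Ct Dt k i j := by
  induction k generalizing i j with
  | zero => exact le_rfl
  | succ k ih =>
    rw [nareIter_succ]
    exact h.nareMap_nonneg ih i j

lemma nareIter_le_succ (k : ℕ) (i : ι) (j : κ) :
    nareIter At Bt Ct Dt k i j ≤ nareIter At Bt Ct Dt (k + 1) i j := by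
  induction k generalizing i j with
  | zero =>
    rw [nareIter_succ]
    exact h.nareMap_nonneg (fun _ _ => le_rfl) i j
  | succ k ih =>
    simpa only [← nareIter_succ] using h.nareMap_mono (h.nareIter_nonneg k) ih i j

lemma nareIter_le_of_isFixedPt {X : Matrix ι κ ℝ} (hX0 : ∀ i j, 0 ≤ X i j)
    (hX : nareMap At Bt Ct Dt X = X) (k : ℕ) (i : ι) (j : κ) :
    nareIter At Bt Ct Dt k i j ≤ X i j := by
  induction k generalizing i j with
  | zero => exact hX0 i j
  | succ k ih =>
    rw [nareIter_succ, ← hX]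
    exact h.nareMap_mono (h.nareIter_nonneg k) ih i j

lemma nareIter_mulVec_one_le (k : ℕ) (i : ι) : (nareIter At Bt Ct Dt k *ᵥ 1) i ≤ 1 := by
  induction k generalizing i with
  | zero => simp [nareIter_zero]
  | succ k ih =>
    have hstep : ∀ i j,
        nareIter At Bt Ct Dt k i j ≤ nareMap At Bt Ct Dt (nareIter At Bt Ct Dt k) i j :=
      fun i j => nareIter_succ At Bt Ct Dt k ▸ h.nareIter_le_succ k i j
    rw [nareIter_succ]
    exact h.nareMap_mulVec_one_le (h.nareIter_nonneg k) ih hstep i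

variable {Ψt : Matrix ι κ ℝ} (hΨ0 : ∀ i j, 0 ≤ Ψt i j)
  (hΨsol : Ψt * Bt * Ψt - Ψt * At - Dt * Ψt + Ct = 0)
include hΨ0 hΨsol

/-- The limit of the increasing iteration is a nonnegative solution lying below every nonnegative
solution. -/
lemma tendsto_nareIter (hΨmin : ∀ Z : Matrix ι κ ℝ, (∀ i j, 0 ≤ Z i j) →
      Z * Bt * Z - Z * At - Dt * Z + Ct = 0 → ∀ i j, Ψt i j ≤ Z i j) (i : ι) (j : κ) :
    Tendsto (fun k => nareIter At Bt Ct Dt k i j) atTop (𝓝 (Ψt i j)) := by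
  have hden : ∀ i j, Dt i i + At j j ≠ 0 := fun i j => (h.den_pos i j).ne'
  have hle := h.nareIter_le_of_isFixedPt hΨ0 ((nareMap_eq_self_iff _ _ _ _ hden Ψt).mpr hΨsol)
  let L : Matrix ι κ ℝ := of fun i j => ⨆ k, nareIter At Bt Ct Dt k i j
  have hL : ∀ i j, Tendsto (fun k => nareIter At Bt Ct Dt k i j) atTop (𝓝 (L i j)) :=
    fun i j => tendsto_atTop_ciSup (monotone_nat_of_le_succ fun k => h.nareIter_le_succ k i j)
      ⟨Ψt i j, by rintro _ ⟨k, rfl⟩; exact hle k i j⟩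
  have hLt : Tendsto (nareIter At Bt Ct Dt) atTop (𝓝 L) :=
    tendsto_pi_nhds.2 fun i => tendsto_pi_nhds.2 (hL i)
  have hLfix : nareMap At Bt Ct Dt L = L :=
    isFixedPt_of_tendsto_iterate hLt (continuous_nareMap At Bt Ct Dt).continuousAt
  have hΨL := hΨmin L (fun i j => ge_of_tendsto' (hL i j) fun k => h.nareIter_nonneg k i j)
    ((nareMap_eq_self_iff _ _ _ _ hden L).mp hLfix)
  have hLΨ : L i j = Ψt i j := le_antisymm (le_of_tendsto' (hL i j) fun k => hle k i j) (hΨL i j)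
  exact hLΨ ▸ hL i j

lemma mulVec_one_le_of_minimal (hΨmin : ∀ Z : Matrix ι κ ℝ, (∀ i j, 0 ≤ Z i j) →
      Z * Bt * Z - Z * At - Dt * Z + Ct = 0 → ∀ i j, Ψt i j ≤ Z i j) (i : ι) :
    (Ψt *ᵥ 1) i ≤ 1 :=
  le_of_tendsto'
    (tendsto_finsetSum _ fun j _ => (h.tendsto_nareIter hΨ0 hΨsol hΨmin i j).mul_const _)
    fun k => h.nareIter_mulVec_one_le k i

end IsMAREData

end NARE

section Comparison

variable {ω : ℝ} {ι κ : Type*} [DecidableEq ι] [DecidableEq κ]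

/-- The entrywise comparison `[[Dt, -Ct], [-Bt, At]] ≤ omegaComp ω [[D, -C], [-B, A]]`,
block by block. -/
structure IsOmegaDominated (ω : ℝ) (A : Matrix κ κ ℂ) (B : Matrix κ ι ℂ) (C : Matrix ι κ ℂ)
    (D : Matrix ι ι ℂ) (At : Matrix κ κ ℝ) (Bt : Matrix κ ι ℝ) (Ct : Matrix ι κ ℝ)
    (Dt : Matrix ι ι ℝ) : Prop where
  A_le : ∀ j k, At j k ≤ omegaComp ω A j k
  D_le : ∀ i k, Dt i k ≤ omegaComp ω D i k
  norm_B_le : ∀ j i, ‖B j i‖ ≤ Bt j i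
  norm_C_le : ∀ i j, ‖C i j‖ ≤ Ct i j

lemma IsOmegaDominated.of_fromBlocks {A : Matrix κ κ ℂ} {B : Matrix κ ι ℂ} {C : Matrix ι κ ℂ}
    {D : Matrix ι ι ℂ} {At : Matrix κ κ ℝ} {Bt : Matrix κ ι ℝ} {Ct : Matrix ι κ ℝ}
    {Dt : Matrix ι ι ℝ} (h : ∀ i j, fromBlocks Dt (-Ct) (-Bt) At i j ≤
      omegaComp ω (fromBlocks D (-C) (-B) A) i j) :
    IsOmegaDominated ω A B C D At Bt Ct Dt where
  A_le j k := by simpa [omegaComp] using h (.inr j) (.inr k)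
  D_le i k := by simpa [omegaComp] using h (.inl i) (.inl k)
  norm_B_le j i := by simpa [omegaComp] using h (.inr j) (.inl i)
  norm_C_le i j := by simpa [omegaComp] using h (.inl i) (.inr j)

variable [Fintype ι] [Fintype κ]

lemma IsMAREData.of_isOmegaDominated {A : Matrix κ κ ℂ} {B : Matrix κ ι ℂ} {C : Matrix ι κ ℂ}
    {D : Matrix ι ι ℂ} {At : Matrix κ κ ℝ} {Bt : Matrix κ ι ℝ} {Ct : Matrix ι κ ℝ}
    {Dt : Matrix ι ι ℝ} (hd : IsOmegaDominated ω A B C D At Bt Ct Dt)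
    (h1 : ∀ i, 0 < (fromBlocks Dt (-Ct) (-Bt) At *ᵥ 1) i) : IsMAREData At Bt Ct Dt where
  B_nonneg j i := (norm_nonneg _).trans (hd.norm_B_le j i)
  C_nonneg i j := (norm_nonneg _).trans (hd.norm_C_le i j)
  A_offDiag_nonpos j k hjk :=
    neg_nonneg.mp ((norm_nonneg _).trans (norm_le_neg_of_le_omegaComp hd.A_le hjk))
  D_offDiag_nonpos i k hik :=
    neg_nonneg.mp ((norm_nonneg _).trans (norm_le_neg_of_le_omegaComp hd.D_le hik))
  B_rowSum_lt j := by
    have := h1 (.inr j)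
    simp [fromBlocks_mulVec, neg_mulVec] at this
    linarith
  C_rowSum_lt i := by
    have := h1 (.inl i)
    simp [fromBlocks_mulVec, neg_mulVec] at this
    linarith

end Comparison

namespace IsOmegaDominated

variable {ι κ : Type*} [DecidableEq ι] [DecidableEq κ] {ω : ℝ}
  {A : Matrix κ κ ℂ} {B : Matrix κ ι ℂ} {C : Matrix ι κ ℂ} {D : Matrix ι ι ℂ}
  {At : Matrix κ κ ℝ} {Bt : Matrix κ ι ℝ} {Ct : Matrix ι κ ℝ} {Dt : Matrix ι ι ℝ}
  (hω : ω ∈ Set.Icc (0 : ℝ) 1) (hd : IsOmegaDominated ω A B C D At Bt Ct Dt)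

include hω hd in
lemma den_le_norm (i : ι) (j : κ) : Dt i i + At j j ≤ ‖D i i + A j j‖ :=
  calc Dt i i + At j j ≤ wlin ω (D i i) + wlin ω (A j j) :=
        add_le_add (le_wlin_of_le_omegaComp hd.D_le i) (le_wlin_of_le_omegaComp hd.A_le j)
    _ = wlin ω (D i i + A j j) := (wlin_add ω _ _).symm
    _ ≤ ‖D i i + A j j‖ := wlin_le_norm hω _

variable [Fintype ι] [Fintype κ] (h : IsMAREData At Bt Ct Dt)

include hd in
lemma norm_nareNumer_sub_le {Y Y' : Matrix ι κ ℂ} {Z Z' : Matrix ι κ ℝ}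
    (hY : ∀ i j, ‖Y i j‖ ≤ Z i j) (hY' : ∀ i j, ‖Y' i j‖ ≤ Z' i j)
    (hYY' : ∀ i j, ‖(Y' - Y) i j‖ ≤ (Z' - Z) i j) (i : ι) (j : κ) :
    ‖(nareNumer A B C D Y' - nareNumer A B C D Y) i j‖
      ≤ (nareNumer At Bt Ct Dt Z' - nareNumer At Bt Ct Dt Z) i j := by
  rw [nareNumer_sub_nareNumer, nareNumer_sub_nareNumer]
  simp only [Matrix.add_apply]
  refine (norm_add₄_le ..).trans (add_le_add (add_le_add (add_le_add ?_ ?_) ?_) ?_)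
  · exact norm_mul_apply_le (norm_mul_apply_le hYY' hd.norm_B_le) hY' i j
  · exact norm_mul_apply_le (norm_mul_apply_le hY hd.norm_B_le) hYY' i j
  · exact norm_mul_apply_le (norm_diagonal_diag_sub_le hd.D_le) hYY' i j
  · exact norm_mul_apply_le hYY' (norm_diagonal_diag_sub_le hd.A_le) i j

include hω hd h

lemma norm_nareMap_sub_le {Y Y' : Matrix ι κ ℂ} {Z Z' : Matrix ι κ ℝ}
    (hY : ∀ i j, ‖Y i j‖ ≤ Z i j) (hY' : ∀ i j, ‖Y' i j‖ ≤ Z' i j)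
    (hYY' : ∀ i j, ‖(Y' - Y) i j‖ ≤ (Z' - Z) i j) (i : ι) (j : κ) :
    ‖(nareMap A B C D Y' - nareMap A B C D Y) i j‖
      ≤ (nareMap At Bt Ct Dt Z' - nareMap At Bt Ct Dt Z) i j := by
  simp only [Matrix.sub_apply, nareMap_apply, ← sub_div, norm_div]
  have hnum := hd.norm_nareNumer_sub_le hY hY' hYY' i j
  exact div_le_div₀ ((norm_nonneg _).trans hnum) hnum (h.den_pos i j) (hd.den_le_norm hω i j)

lemma norm_nareMap_zero_le (i : ι) (j : κ) :
    ‖nareMap A B C D 0 i j‖ ≤ nareMap At Bt Ct Dt 0 i j := by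
  simp only [nareMap_apply, nareNumer, Matrix.mul_zero, Matrix.zero_mul, zero_add, add_zero,
    norm_div]
  exact div_le_div₀ (h.C_nonneg i j) (hd.norm_C_le i j) (h.den_pos i j) (hd.den_le_norm hω i j)

lemma norm_nareIter_le_and_norm_sub_le (k : ℕ) :
    (∀ i j, ‖nareIter A B C D k i j‖ ≤ nareIter At Bt Ct Dt k i j) ∧
    ∀ i j, ‖(nareIter A B C D (k + 1) - nareIter A B C D k) i j‖
      ≤ (nareIter At Bt Ct Dt (k + 1) - nareIter At Bt Ct Dt k) i j := by
  induction k with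
  | zero =>
    refine ⟨fun i j => by simp [nareIter_zero], fun i j => ?_⟩
    simpa [nareIter_succ, nareIter_zero] using hd.norm_nareMap_zero_le hω h i j
  | succ k ih =>
    have hk1 : ∀ i j, ‖nareIter A B C D (k + 1) i j‖ ≤ nareIter At Bt Ct Dt (k + 1) i j := by
      intro i j
      have := ih.2 i j
      simp only [Matrix.sub_apply] at this
      linarith [norm_le_norm_add_norm_sub' (nareIter A B C D (k + 1) i j)
        (nareIter A B C D k i j), ih.1 i j]
    refine ⟨hk1, ?_⟩
    simpa only [← nareIter_succ] using hd.norm_nareMap_sub_le hω h ih.1 hk1 ih.2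

lemma norm_nareIter_sub_le {k l : ℕ} (hkl : k ≤ l) (i : ι) (j : κ) :
    ‖nareIter A B C D l i j - nareIter A B C D k i j‖
      ≤ nareIter At Bt Ct Dt l i j - nareIter At Bt Ct Dt k i j := by
  induction l, hkl using Nat.le_induction with
  | base => simp
  | succ l hkl ih =>
    have := (hd.norm_nareIter_le_and_norm_sub_le hω h l).2 i j
    simp only [Matrix.sub_apply] at this
    linarith [norm_sub_le_norm_sub_add_norm_sub (nareIter A B C D (l + 1) i j)
      (nareIter A B C D l i j) (nareIter A B C D k i j)]

lemma wlin_pos_of_mem_spectrum_sub_mul_right {Ψ : Matrix ι κ ℂ} {Ψt : Matrix ι κ ℝ}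
    (hΨ : ∀ i j, ‖Ψ i j‖ ≤ Ψt i j) (hΨ1 : ∀ i, (Ψt *ᵥ 1) i ≤ 1) {μ : ℂ}
    (hμ : μ ∈ spectrum ℂ (A - B * Ψ)) : 0 < wlin ω μ :=
  wlin_pos_of_mem_spectrum hω (fun _ => one_pos) (fun j => (h.sub_mul_mulVec_one_pos hΨ1 j).trans_le
    (dotProduct_le_dotProduct_of_nonneg_right
      (le_omegaComp_sub hω hd.A_le (norm_mul_apply_le hd.norm_B_le hΨ) j) fun _ => zero_le_one)) hμ

variable {Ψt : Matrix ι κ ℝ} (hΨ0 : ∀ i j, 0 ≤ Ψt i j)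
  (hΨsol : Ψt * Bt * Ψt - Ψt * At - Dt * Ψt + Ct = 0)
include hΨ0 hΨsol

theorem exists_solution_norm_le (hΨmin : ∀ Z : Matrix ι κ ℝ, (∀ i j, 0 ≤ Z i j) →
      Z * Bt * Z - Z * At - Dt * Z + Ct = 0 → ∀ i j, Ψt i j ≤ Z i j) :
    ∃ Ψ : Matrix ι κ ℂ, Ψ * B * Ψ - Ψ * A - D * Ψ + C = 0 ∧ ∀ i j, ‖Ψ i j‖ ≤ Ψt i j := by
  have hZ := h.tendsto_nareIter hΨ0 hΨsol hΨmin
  have hZle := h.nareIter_le_of_isFixedPt hΨ0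
    ((nareMap_eq_self_iff _ _ _ _ (fun i j => (h.den_pos i j).ne') Ψt).mpr hΨsol)
  have hcauchy (i : ι) (j : κ) : CauchySeq fun k => nareIter A B C D k i j :=
    cauchySeq_of_le_tendsto_0' (fun k => Ψt i j - nareIter At Bt Ct Dt k i j)
      (fun k l hkl => by
        rw [dist_comm, dist_eq_norm]
        linarith [hd.norm_nareIter_sub_le hω h hkl i j, hZle l i j])
      (by simpa using (hZ i j).const_sub (Ψt i j))
  choose Ψ hΨ using fun i j => cauchySeq_tendsto_of_complete (hcauchy i j)
  have hΨt : Tendsto (nareIter A B C D) atTop (𝓝 (of Ψ)) :=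
    tendsto_pi_nhds.2 fun i => tendsto_pi_nhds.2 (hΨ i)
  have hden : ∀ i j, D i i + A j j ≠ 0 := fun i j =>
    norm_pos_iff.mp ((h.den_pos i j).trans_le (hd.den_le_norm hω i j))
  refine ⟨of Ψ, (nareMap_eq_self_iff A B C D hden _).mp
    (isFixedPt_of_tendsto_iterate hΨt (continuous_nareMap A B C D).continuousAt), fun i j => ?_⟩
  exact le_of_tendsto_of_tendsto' (hΨ i j).norm (hZ i j)
    fun k => (hd.norm_nareIter_le_and_norm_sub_le hω h k).1 i j

lemma wlin_pos_of_mem_spectrum_sub_mul_left {Ψ : Matrix ι κ ℂ} (hΨ : ∀ i j, ‖Ψ i j‖ ≤ Ψt i j)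
    (hΨ1 : ∀ i, (Ψt *ᵥ 1) i ≤ 1) {μ : ℂ} (hμ : μ ∈ spectrum ℂ (D - Ψ * B)) : 0 < wlin ω μ :=
  have hw := h.one_sub_mulVec_pos hΨ0 hΨsol hΨ1
  wlin_pos_of_mem_spectrum hω hw (fun i => (h.sub_mul_mulVec_one_sub_pos hΨ0 hΨsol i).trans_le
    (dotProduct_le_dotProduct_of_nonneg_right
      (le_omegaComp_sub hω hd.D_le (norm_mul_apply_le hΨ hd.norm_B_le) i) fun j => (hw j).le)) hμ

/-- `E = Y - Ψ` solves `E (A - B Y) = (Ψ B - D) E`, and the two coefficients have their spectra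
on opposite sides of `wlin ω = 0`. -/
theorem eq_of_forall_mem_spectrum {Ψ Y : Matrix ι κ ℂ} (hΨ : ∀ i j, ‖Ψ i j‖ ≤ Ψt i j)
    (hΨ1 : ∀ i, (Ψt *ᵥ 1) i ≤ 1) (hΨC : Ψ * B * Ψ - Ψ * A - D * Ψ + C = 0)
    (hYC : Y * B * Y - Y * A - D * Y + C = 0)
    (hY : ∀ μ ∈ spectrum ℂ (A - B * Y), 0 < wlin ω μ) : Y = Ψ := by
  have hE : (Y - Ψ) * (A - B * Y) = (Ψ * B - D) * (Y - Ψ) := by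
    have hres : (Y - Ψ) * (A - B * Y) - (Ψ * B - D) * (Y - Ψ)
        = (Ψ * B * Ψ - Ψ * A - D * Ψ + C) - (Y * B * Y - Y * A - D * Y + C) := by
      simp only [Matrix.sub_mul, Matrix.mul_sub, Matrix.mul_assoc]
      abel
    rwa [hΨC, hYC, sub_zero, sub_eq_zero] at hres
  refine sub_eq_zero.mp (eq_zero_of_mul_eq_mul_of_disjoint_spectrum hE fun μ hμ hμY => ?_)
  rw [← neg_sub, ← spectrum.neg_eq, Set.mem_neg] at hμ
  have := hd.wlin_pos_of_mem_spectrum_sub_mul_left hω h hΨ0 hΨsol hΨ hΨ1 hμ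
  rw [wlin_neg] at this
  linarith [hY μ hμY]

end IsOmegaDominated

theorem stmt5_general {m n : ℕ} (ω : ℝ) (hω : ω ∈ Set.Icc (0 : ℝ) 1)
    (A : Matrix (Fin m) (Fin m) ℂ) (B : Matrix (Fin m) (Fin n) ℂ)
    (C : Matrix (Fin n) (Fin m) ℂ) (D : Matrix (Fin n) (Fin n) ℂ)
    (At : Matrix (Fin m) (Fin m) ℝ) (Bt : Matrix (Fin m) (Fin n) ℝ)
    (Ct : Matrix (Fin n) (Fin m) ℝ) (Dt : Matrix (Fin n) (Fin n) ℝ)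
    (hQtle : ∀ i j, Matrix.fromBlocks Dt (-Ct) (-Bt) At i j ≤
      omegaComp ω (Matrix.fromBlocks D (-C) (-B) A) i j)
    (hQt1 : ∀ i, 0 < ((Matrix.fromBlocks Dt (-Ct) (-Bt) At) *ᵥ 1) i)
    (Ψt : Matrix (Fin n) (Fin m) ℝ)
    (hΨtPos : ∀ i j, 0 ≤ Ψt i j)
    (hΨtSol : Ψt * Bt * Ψt - Ψt * At - Dt * Ψt + Ct = 0)
    (hΨtMin : ∀ Z : Matrix (Fin n) (Fin m) ℝ, (∀ i j, 0 ≤ Z i j) →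
      Z * Bt * Z - Z * At - Dt * Z + Ct = 0 → ∀ i j, Ψt i j ≤ Z i j) :
    (∃! Ψ : Matrix (Fin n) (Fin m) ℂ,
      Ψ * B * Ψ - Ψ * A - D * Ψ + C = 0 ∧ ∀ i j, ‖Ψ i j‖ ≤ Ψt i j) ∧
    ∀ Ψ : Matrix (Fin n) (Fin m) ℂ,
      (Ψ * B * Ψ - Ψ * A - D * Ψ + C = 0 ∧ ∀ i j, ‖Ψ i j‖ ≤ Ψt i j) →
      IsUnit (A - B * Ψ).det ∧
      (∀ μ ∈ spectrum ℂ (A - B * Ψ), 0 < wlin ω μ) ∧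
      ∀ Y : Matrix (Fin n) (Fin m) ℂ, Y * B * Y - Y * A - D * Y + C = 0 →
        (∀ μ ∈ spectrum ℂ (A - B * Y), 0 < wlin ω μ) → Y = Ψ := by
  have hd := IsOmegaDominated.of_fromBlocks hQtle
  have h := IsMAREData.of_isOmegaDominated hd hQt1
  have hΨt1 := h.mulVec_one_le_of_minimal hΨtPos hΨtSol hΨtMin
  have hspec (Ψ : Matrix (Fin n) (Fin m) ℂ) (hΨ : ∀ i j, ‖Ψ i j‖ ≤ Ψt i j) :
      ∀ μ ∈ spectrum ℂ (A - B * Ψ), 0 < wlin ω μ :=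
    fun _ hμ => hd.wlin_pos_of_mem_spectrum_sub_mul_right hω h hΨ hΨt1 hμ
  have huniq (Ψ Y : Matrix (Fin n) (Fin m) ℂ)
      (hΨ : Ψ * B * Ψ - Ψ * A - D * Ψ + C = 0 ∧ ∀ i j, ‖Ψ i j‖ ≤ Ψt i j)
      (hY : Y * B * Y - Y * A - D * Y + C = 0)
      (hYspec : ∀ μ ∈ spectrum ℂ (A - B * Y), 0 < wlin ω μ) : Y = Ψ :=
    hd.eq_of_forall_mem_spectrum hω h hΨtPos hΨtSol hΨ.2 hΨt1 hΨ.1 hY hYspec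
  obtain ⟨Ψ, hΨ⟩ := hd.exists_solution_norm_le hω h hΨtPos hΨtSol hΨtMin
  refine ⟨⟨Ψ, hΨ, fun Y hY => huniq Ψ Y hΨ hY.1 (hspec Y hY.2)⟩,
    fun Ψ' hΨ' => ⟨?_, hspec Ψ' hΨ'.2, fun Y => huniq Ψ' Y hΨ'⟩⟩
  rw [← isUnit_iff_isUnit_det, ← spectrum.zero_notMem_iff ℂ]
  intro h0
  simpa [wlin] using hspec Ψ' hΨ'.2 0 h0

/-- Existence, uniqueness and extremality for the dual NARE
`YBY − YA − DY + C = 0`. -/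
theorem stmt5 {m n : ℕ} (ω : ℝ) (hω : ω ∈ Set.Icc (0 : ℝ) 1)
    (A : Matrix (Fin m) (Fin m) ℂ) (B : Matrix (Fin m) (Fin n) ℂ)
    (C : Matrix (Fin n) (Fin m) ℂ) (D : Matrix (Fin n) (Fin n) ℂ)
    (At : Matrix (Fin m) (Fin m) ℝ) (Bt : Matrix (Fin m) (Fin n) ℝ)
    (Ct : Matrix (Fin n) (Fin m) ℝ) (Dt : Matrix (Fin n) (Fin n) ℝ)
    (hQ : IsNonsingMMatrix (omegaComp ω (Matrix.fromBlocks D (-C) (-B) A)))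
    (hQ1 : ∀ i, 0 < ((omegaComp ω (Matrix.fromBlocks D (-C) (-B) A)) *ᵥ 1) i)
    (hQt : IsNonsingMMatrix (Matrix.fromBlocks Dt (-Ct) (-Bt) At))
    (hQtle : ∀ i j, Matrix.fromBlocks Dt (-Ct) (-Bt) At i j ≤
      omegaComp ω (Matrix.fromBlocks D (-C) (-B) A) i j)
    (hQt1 : ∀ i, 0 < ((Matrix.fromBlocks Dt (-Ct) (-Bt) At) *ᵥ 1) i)
    (Ψt : Matrix (Fin n) (Fin m) ℝ)
    (hΨtPos : ∀ i j, 0 ≤ Ψt i j)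
    (hΨtSol : Ψt * Bt * Ψt - Ψt * At - Dt * Ψt + Ct = 0)
    (hΨtMin : ∀ Z : Matrix (Fin n) (Fin m) ℝ, (∀ i j, 0 ≤ Z i j) →
      Z * Bt * Z - Z * At - Dt * Z + Ct = 0 → ∀ i j, Ψt i j ≤ Z i j) :
    (∃! Ψ : Matrix (Fin n) (Fin m) ℂ,
      Ψ * B * Ψ - Ψ * A - D * Ψ + C = 0 ∧ ∀ i j, ‖Ψ i j‖ ≤ Ψt i j) ∧
    ∀ Ψ : Matrix (Fin n) (Fin m) ℂ,
      (Ψ * B * Ψ - Ψ * A - D * Ψ + C = 0 ∧ ∀ i j, ‖Ψ i j‖ ≤ Ψt i j) →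
      IsUnit (A - B * Ψ).det ∧
      (∀ μ ∈ spectrum ℂ (A - B * Ψ), 0 < wlin ω μ) ∧
      ∀ Y : Matrix (Fin n) (Fin m) ℂ, Y * B * Y - Y * A - D * Y + C = 0 →
        (∀ μ ∈ spectrum ℂ (A - B * Y), 0 < wlin ω μ) → Y = Ψ :=
  stmt5_general ω hω A B C D At Bt Ct Dt hQtle hQt1 Ψt hΨtPos hΨtSol hΨtMin
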